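/- Let B > 1 and let P^{(1)}, P^{(2)}, … be i.i.d. random variables valued in (0,1) with a continuous probability density, and let φ(k) = E[e^{ik·log_B P^{(1)}}] denote the characteristic function of log_B P^{(1)}. Assume that lim_{n→∞} Σ_{ℓ ∈ ℤ, ℓ ≠ 0} |φ(2πℓ)|^n = 0. Then the products X^{(n)} = P^{(1)} · P^{(2)} ⋯ P^{(n)} converge to strong Benford behavior base B; that is, for every D ∈ [1,B], P( S_B(X^{(n)}) ≤ D ) → log_B D as n → ∞. -/

import Mathlib

open MeasureTheory ProbabilityTheory Filter

/-- The significand of `x` in base `B`: the unique element of `[1, B)` of the form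
`x / B ^ k` for an integer `k` (for `x > 0`, `B > 1`). -/
noncomputable def significand (B x : ℝ) : ℝ := B ^ (Int.fract (Real.logb B x))

/-- A sequence of (positive) random variables converges to strong Benford behavior in
base `B` if for all `D ∈ [1, B]` the probability that the significand is at most `D`
tends to `log_B D`. -/
def StrongBenford {Ω : Type*} [MeasurableSpace Ω] (μ : Measure Ω) (B : ℝ)
    (X : ℕ → Ω → ℝ) : Prop :=
  ∀ D ∈ Set.Icc 1 B,
    Tendsto (fun n => (μ {ω | significand B (X n ω) ≤ D}).toReal)
      atTop (nhds (Real.logb B D))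

/-!
The base-`B` logarithms `Y t = log_B P⁽ᵗ⁾` are i.i.d. with an atomless law, and the significand
of `X⁽ⁿ⁾` is read off the fractional part of `Sₙ = Y 0 + ⋯ + Y (n-1)`. Wrapped around the unit
circle, the `ℓ`-th Fourier coefficient of the law of `Sₙ` is `φ(2πℓ)ⁿ`, where `φ` is the
characteristic function of `Y 0`; an atomless law is not carried by a lattice coset, so
`|φ(2πℓ)| < 1` for `ℓ ≠ 0` and these coefficients tend to `0`. By Weyl's criterion the wrapped
laws converge weakly to the Haar measure, and the portmanteau theorem applied to the arc
`[0, log_B D]`, whose endpoints are null, gives `P(S_B(X⁽ⁿ⁾) ≤ D) → log_B D`.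
-/

open Complex Metric Topology BoundedContinuousFunction

lemma Real.measurable_logb (b : ℝ) : Measurable (Real.logb b) :=
  Real.measurable_log.div_const _

namespace AddCircle

variable {T : ℝ}

lemma integral_fourier_map_coe (ν : Measure ℝ) (n : ℤ) :
    ∫ z, fourier n z ∂(ν.map ((↑) : ℝ → AddCircle T)) = charFun ν (2 * Real.pi * n / T) := by
  rw [integral_map AddCircle.measurable_mk'.aemeasurable
    (map_continuous _).aestronglyMeasurable, charFun_apply_real]
  congr with x
  rw [fourier_coe_apply]
  push_cast
  ring_nf

variable [hT : Fact (0 < T)]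

lemma integral_fourier_haarAddCircle {n : ℤ} (hn : n ≠ 0) :
    ∫ x, fourier n x ∂(haarAddCircle (T := T)) = 0 :=
  integral_eq_zero_of_add_right_eq_neg (fourier_add_half_inv_index hn hT.out)

theorem tendsto_haarAddCircle_of_tendsto_fourier {ι : Type*} {l : Filter ι}
    {ν : ι → ProbabilityMeasure (AddCircle T)}
    (h : ∀ n : ℤ, n ≠ 0 →
      Tendsto (fun i ↦ ∫ x, fourier n x ∂(ν i : Measure (AddCircle T))) l (𝓝 0)) :
    Tendsto ν l (𝓝 ⟨haarAddCircle, inferInstance⟩) := by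
  refine ProbabilityMeasure.tendsto_of_tight_of_separatesPoints ℂ .of_compactSpace
    (A := fourierSubalgebra.comap (toContinuousMapStarₐ ℂ)) ?_ fun g hg ↦ ?_
  · intro x y hxy
    obtain ⟨_, ⟨g, hg, rfl⟩, hgxy⟩ := fourierSubalgebra_separatesPoints hxy
    exact ⟨_, ⟨toContinuousMapStarₐ ℂ (mkOfCompact g), ⟨mkOfCompact g, hg, rfl⟩, rfl⟩, hgxy⟩
  suffices ∀ p ∈ Submodule.span ℂ (Set.range (fourier (T := T))), Tendsto
      (fun i ↦ ∫ x, p x ∂(ν i : Measure (AddCircle T))) l (𝓝 (∫ x, p x ∂haarAddCircle)) from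
    this _ (by rw [← fourierSubalgebra_coe]; exact hg)
  intro p hp
  induction hp using Submodule.span_induction with
  | mem _ hp =>
    obtain ⟨n, rfl⟩ := hp
    rcases eq_or_ne n 0 with rfl | hn
    · simpa using tendsto_const_nhds
    · rw [integral_fourier_haarAddCircle hn]
      exact h n hn
  | zero => simpa using tendsto_const_nhds
  | add p q _ _ hp hq =>
    convert hp.add hq using 2 <;>
      exact integral_add ((mkOfCompact p).integrable _) ((mkOfCompact q).integrable _)
  | smul c p _ hp => simpa [integral_const_mul] using hp.const_mul c

end AddCircle

namespace UnitAddCircle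

lemma haarAddCircle_eq_volume : AddCircle.haarAddCircle (T := 1) = volume := by
  simp [AddCircle.volume_eq_smul_haarAddCircle]

lemma coe_mem_closedBall_half_iff_fract_le (u s : ℝ) :
    (s : UnitAddCircle) ∈ closedBall ((u / 2 : ℝ) : UnitAddCircle) (u / 2) ↔
      Int.fract s ≤ u := by
  rw [mem_closedBall, dist_eq_norm, ← AddCircle.coe_sub, norm_eq]
  constructor
  · intro h
    obtain ⟨h₁, h₂⟩ := abs_le.mp h
    have : (round (s - u / 2) : ℝ) ≤ ⌊s⌋ := by exact_mod_cast Int.le_floor.mpr (by linarith)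
    linarith [Int.self_sub_floor s]
  · intro h
    refine (round_le _ ⌊s⌋).trans (abs_le.mpr ⟨?_, ?_⟩) <;>
      linarith [Int.self_sub_floor s, Int.fract_nonneg s]

lemma sphere_subset (x : UnitAddCircle) (r : ℝ) : sphere x r ⊆ {x + r, x - r} := by
  intro y hy
  rw [Set.mem_insert_iff, Set.mem_singleton_iff]
  obtain ⟨a, ha⟩ := QuotientAddGroup.mk_surjective (y - x)
  rw [mem_sphere, dist_eq_norm, ← ha, norm_eq] at hy
  have hcoe : ((a - round a : ℝ) : UnitAddCircle) = y - x := by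
    rw [AddCircle.coe_sub, ← ha]
    simp
  rcases (abs_eq (hy ▸ abs_nonneg _)).mp hy with h | h <;> rw [h] at hcoe
  · exact .inl (by rw [hcoe]; abel)
  · rw [AddCircle.coe_neg] at hcoe
    exact .inr (by rw [sub_eq_add_neg, hcoe]; abel)

lemma volume_sphere (x : UnitAddCircle) (r : ℝ) : volume (sphere x r) = 0 := by
  have (y : UnitAddCircle) : volume {y} = 0 := by
    simpa using AddCircle.volume_closedBall (T := 1) (x := y) 0
  exact measure_mono_null (sphere_subset x r) (measure_union_null (this _) (this _))

lemma tendsto_measureReal_closedBall_of_tendsto_fourier {ν : ℕ → Measure UnitAddCircle}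
    [∀ n, IsProbabilityMeasure (ν n)]
    (h : ∀ n : ℤ, n ≠ 0 → Tendsto (fun i ↦ ∫ x, fourier n x ∂(ν i)) atTop (𝓝 0))
    {u : ℝ} (hu : u ∈ Set.Icc 0 1) :
    Tendsto (fun i ↦ (ν i).real (closedBall ((u / 2 : ℝ) : UnitAddCircle) (u / 2)))
      atTop (𝓝 u) := by
  set E := closedBall ((u / 2 : ℝ) : UnitAddCircle) (u / 2)
  have hE : volume E = ENNReal.ofReal u := by
    rw [AddCircle.volume_closedBall, min_eq_right (by linarith [hu.2])]
    ring_nf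
  have hfrontier : volume (frontier E) = 0 :=
    measure_mono_null frontier_closedBall_subset_sphere (volume_sphere _ _)
  have hweak := AddCircle.tendsto_haarAddCircle_of_tendsto_fourier
    (ν := fun i ↦ ⟨ν i, inferInstance⟩) h
  have hE_lim := ProbabilityMeasure.tendsto_measure_of_null_frontier_of_tendsto' hweak
    (by simpa [haarAddCircle_eq_volume] using hfrontier)
  simp only [ProbabilityMeasure.coe_mk, haarAddCircle_eq_volume, hE] at hE_lim
  rw [← ENNReal.toReal_ofReal hu.1]
  exact (ENNReal.tendsto_toReal ENNReal.ofReal_ne_top).comp hE_lim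

end UnitAddCircle

lemma countable_setOf_exp_mul_I_eq {t : ℝ} (ht : t ≠ 0) (c : ℂ) :
    {x : ℝ | exp (t * x * I) = c}.Countable := by
  rcases Set.eq_empty_or_nonempty {x : ℝ | exp (t * x * I) = c} with h | ⟨x₀, hx₀⟩
  · simp [h]
  refine (Set.countable_range fun m : ℤ ↦ x₀ + 2 * Real.pi * m / t).mono fun x hx ↦ ?_
  obtain ⟨m, hm⟩ := exp_eq_exp_iff_exists_int.mp (hx.trans hx₀.symm)
  refine ⟨m, ?_⟩
  have : t * x = t * x₀ + m * (2 * Real.pi) := by simpa using congrArg im hm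
  field_simp
  linarith

lemma norm_charFun_lt_one {μ : Measure ℝ} [IsProbabilityMeasure μ] [NullSingletonClass μ]
    {t : ℝ} (ht : t ≠ 0) : ‖charFun μ t‖ < 1 := by
  have hle : ∀ᵐ x : ℝ ∂μ, ‖exp (t * x * I)‖ ≤ 1 := .of_forall fun x ↦ by
    rw [← ofReal_mul, norm_exp_ofReal_mul_I]
  rw [charFun_apply_real, ← average_eq_integral]
  -- Otherwise `exp (t x I)` is a.e. constant, so `μ` is carried by a countable lattice coset.
  refine (ae_eq_const_or_norm_average_lt_of_norm_le_const hle).resolve_left fun hconst ↦ ?_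
  have hnull := (countable_setOf_exp_mul_I_eq ht (⨍ x, exp (t * x * I) ∂μ)).measure_zero μ
  obtain ⟨x, hx, hx'⟩ := (hconst.and (measure_eq_zero_iff_ae_notMem.mp hnull)).exists
  exact hx' hx

section
variable {Ω : Type*} [MeasurableSpace Ω] {μ : Measure Ω} {Y : ℕ → Ω → ℝ}

lemma iIndepFun.charFun_map_sum_range_eq_pow (hindep : iIndepFun Y μ)
    (hident : ∀ t, IdentDistrib (Y t) (Y 0) μ μ) (n : ℕ) (s : ℝ) :
    charFun (μ.map fun ω ↦ ∑ t ∈ Finset.range n, Y t ω) s = charFun (μ.map (Y 0)) s ^ n := by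
  rw [(hindep.restrict _).charFun_map_fun_finsetSum_eq_prod
    fun t _ ↦ (hident t).aemeasurable_fst]
  simp [(hident _).map_eq]

theorem tendsto_measureReal_fract_sum_le [IsProbabilityMeasure μ] (hindep : iIndepFun Y μ)
    (hident : ∀ t, IdentDistrib (Y t) (Y 0) μ μ) [NullSingletonClass (μ.map (Y 0))]
    {u : ℝ} (hu : u ∈ Set.Icc 0 1) :
    Tendsto (fun n ↦ μ.real {ω | Int.fract (∑ t ∈ Finset.range n, Y t ω) ≤ u}) atTop (𝓝 u) := by
  have hS (n : ℕ) : AEMeasurable (fun ω ↦ ∑ t ∈ Finset.range n, Y t ω) μ :=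
    Finset.aemeasurable_fun_sum _ fun t _ ↦ (hident t).aemeasurable_fst
  have (n : ℕ) : IsProbabilityMeasure
      ((μ.map fun ω ↦ ∑ t ∈ Finset.range n, Y t ω).map ((↑) : ℝ → UnitAddCircle)) :=
    have := Measure.isProbabilityMeasure_map (hS n)
    Measure.isProbabilityMeasure_map AddCircle.measurable_mk'.aemeasurable
  have := UnitAddCircle.tendsto_measureReal_closedBall_of_tendsto_fourier
    (ν := fun n ↦ (μ.map fun ω ↦ ∑ t ∈ Finset.range n, Y t ω).map (↑)) ?_ hu
  · convert this using 2 with n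
    rw [measureReal_def, measureReal_def, Measure.map_apply AddCircle.measurable_mk'
      measurableSet_closedBall, Measure.map_apply_of_aemeasurable (hS n)
      (AddCircle.measurable_mk' measurableSet_closedBall)]
    congr 2
    ext ω
    exact (UnitAddCircle.coe_mem_closedBall_half_iff_fract_le _ _).symm
  · have := Measure.isProbabilityMeasure_map (hident 0).aemeasurable_fst
    intro ℓ hℓ
    simp_rw [AddCircle.integral_fourier_map_coe,
      iIndepFun.charFun_map_sum_range_eq_pow hindep hident]
    exact tendsto_pow_atTop_nhds_zero_of_norm_lt_one
      (norm_charFun_lt_one (by simp [hℓ, Real.pi_ne_zero]))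

lemma nullSingletonClass_map_logb {b : ℝ} (hb₀ : 0 < b) (hb₁ : b ≠ 1) {X : Ω → ℝ}
    (hX : Measurable X) (hpos : ∀ ω, 0 < X ω) [NullSingletonClass (μ.map X)] :
    NullSingletonClass (μ.map (Real.logb b ∘ X)) where
  measure_singleton r := by
    have hpre : Real.logb b ∘ X ⁻¹' {r} = X ⁻¹' {b ^ r} := by
      ext ω
      exact (Real.logb_eq_iff_rpow_eq hb₀ hb₁ (hpos ω)).trans eq_comm
    rw [Measure.map_apply ((Real.measurable_logb b).comp hX) (measurableSet_singleton r), hpre,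
      ← Measure.map_apply hX (measurableSet_singleton _), measure_singleton]

end

lemma significand_le_iff {B : ℝ} (hB : 1 < B) (x : ℝ) {D : ℝ} (hD : 0 < D) :
    significand B x ≤ D ↔ Int.fract (Real.logb B x) ≤ Real.logb B D :=
  (Real.le_logb_iff_rpow_le hB hD).symm

theorem product_benford_of_charFun_condition_general
    {Ω : Type*} [MeasurableSpace Ω] (μ : Measure Ω) [IsProbabilityMeasure μ]
    (B : ℝ) (hB : 1 < B)
    (P : ℕ → Ω → ℝ)
    (hmeas : ∀ t, Measurable (P t))
    (hval : ∀ t ω, P t ω ∈ Set.Ioo (0 : ℝ) 1)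
    (hindep : iIndepFun P μ)
    (f : ℝ → ℝ)
    (hpdf : ∀ t, μ.map (P t) = volume.withDensity (fun x => ENNReal.ofReal (f x))) :
    StrongBenford μ B (fun n ω => ∏ t ∈ Finset.range n, P t ω) := by
  intro D hD
  have hD₀ : 0 < D := one_pos.trans_le hD.1
  have hident (t : ℕ) : IdentDistrib (P t) (P 0) μ μ :=
    ⟨(hmeas t).aemeasurable, (hmeas 0).aemeasurable, by rw [hpdf, hpdf]⟩
  have : NullSingletonClass (μ.map (P 0)) := hpdf 0 ▸ inferInstance
  have : NullSingletonClass (μ.map (Real.logb B ∘ P 0)) :=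
    nullSingletonClass_map_logb (by linarith) hB.ne' (hmeas 0) fun ω ↦ (hval 0 ω).1
  have hu : Real.logb B D ∈ Set.Icc 0 1 :=
    ⟨Real.logb_nonneg hB hD.1, Real.logb_self_eq_one hB ▸ Real.logb_le_logb_of_le hB hD₀ hD.2⟩
  refine (tendsto_measureReal_fract_sum_le
    (hindep.comp (fun _ ↦ Real.logb B) fun _ ↦ Real.measurable_logb B)
    (fun t ↦ (hident t).comp (Real.measurable_logb B)) hu).congr fun n ↦ ?_
  congr 2 with ω
  simp only [Function.comp_apply, significand_le_iff hB _ hD₀,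
    Real.logb_prod _ _ fun t _ ↦ (hval t ω).1.ne']

/-- Product-Benfordness under the Mellin/characteristic-function regularity condition
(Section 4, underlying Theorem 1.4 and Corollary 1.9): if `P⁽¹⁾, P⁽²⁾, …` are i.i.d.
in `(0,1)` with a continuous density and the characteristic function `φ` of
`log_B P⁽¹⁾` satisfies `Σ_{ℓ≠0} |φ(2πℓ)|ⁿ → 0`, then the products
`X⁽ⁿ⁾ = P⁽¹⁾⋯P⁽ⁿ⁾` converge to strong Benford behavior base `B`. -/
theorem product_benford_of_charFun_condition
    {Ω : Type*} [MeasurableSpace Ω] (μ : Measure Ω) [IsProbabilityMeasure μ]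
    (B : ℝ) (hB : 1 < B)
    (P : ℕ → Ω → ℝ)
    (hmeas : ∀ t, Measurable (P t))
    (hval : ∀ t ω, P t ω ∈ Set.Ioo (0 : ℝ) 1)
    (hindep : iIndepFun P μ)
    (f : ℝ → ℝ)
    (hfcont : ContinuousOn f (Set.Ioo 0 1))
    (hpdf : ∀ t, μ.map (P t) = volume.withDensity (fun x => ENNReal.ofReal (f x)))
    (φ : ℝ → ℂ)
    (hφ : ∀ k : ℝ, φ k = ∫ ω, Complex.exp (Complex.I * k * Real.logb B (P 0 ω)) ∂μ)
    (hcond : Tendsto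
      (fun n : ℕ => ∑' ℓ : {ℓ : ℤ // ℓ ≠ 0}, ‖φ (2 * Real.pi * ((ℓ : ℤ) : ℝ))‖ ^ n)
      atTop (nhds 0)) :
    StrongBenford μ B (fun n ω => ∏ t ∈ Finset.range n, P t ω) :=
  product_benford_of_charFun_condition_general μ B hB P hmeas hval hindep f hpdf
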